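/- Let F be a real normed vector space, let f_1, …, f_m ∈ F, and for each segment k let g_{i,j,k} (i ∈ {1,…,p_k}, j ∈ {1,…,q_{i,k}}) be nonzero real numbers. Define B_k to be the DNF condition ∃ i ∀ j, g_{i,j,k} < 0, and suppose there is exactly one index k* for which B_{k*} holds. Then the iterated limit lim_{ζ→∞} lim_{s→∞} ∑_{k=1}^{m} tanh(ζ · ∑_{i=1}^{p_k} ∏_{j=1}^{q_{i,k}} σ_s(g_{i,j,k})) • f_k equals f_{k*}; i.e., the smoothed GRASHS right-hand side converges to the dynamics of the unique active flight segment. -/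

import Mathlib

open Filter

/-- The sigmoid function with slope parameter `s`. -/
noncomputable def sigmoid (s x : ℝ) : ℝ := 1 / (1 + Real.exp (s * x))

open Finset Topology

/-! As `s → ∞`, `σ_s(g)` tends to the indicator of `g < 0` for `g ≠ 0`, so the inner sum of
segment `k` tends to the number `N k` of satisfied minterms of `B_k`, which is positive exactly
for `k = k*`. Since `tanh (ζ * 0) = 0` while `tanh (ζ * N) → 1` for `N > 0`,
the outer limit picks out `f k*`. -/

lemma sigmoid_eq_real_sigmoid (s x : ℝ) : sigmoid s x = Real.sigmoid (-(s * x)) := by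
  rw [sigmoid, Real.sigmoid_def, neg_neg, one_div]

lemma tendsto_sigmoid_atTop_of_neg {x : ℝ} (hx : x < 0) :
    Tendsto (fun s => sigmoid s x) atTop (𝓝 1) := by
  simp_rw [sigmoid_eq_real_sigmoid]
  exact Real.tendsto_sigmoid_atTop.comp <| tendsto_neg_atBot_atTop.comp <|
    (tendsto_mul_const_atBot_of_neg hx).mpr tendsto_id

lemma tendsto_sigmoid_atTop_of_pos {x : ℝ} (hx : 0 < x) :
    Tendsto (fun s => sigmoid s x) atTop (𝓝 0) := by
  simp_rw [sigmoid_eq_real_sigmoid]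
  exact Real.tendsto_sigmoid_atBot.comp <| tendsto_neg_atTop_atBot.comp <|
    tendsto_id.atTop_mul_const hx

lemma tendsto_sigmoid_atTop {x : ℝ} (hx : x ≠ 0) :
    Tendsto (fun s => sigmoid s x) atTop (𝓝 (if x < 0 then 1 else 0)) := by
  split_ifs with h
  · exact tendsto_sigmoid_atTop_of_neg h
  · exact tendsto_sigmoid_atTop_of_pos (lt_of_le_of_ne (not_lt.mp h) hx.symm)

lemma Real.tanh_eq_two_mul_sigmoid_sub_one (x : ℝ) : tanh x = 2 * Real.sigmoid (2 * x) - 1 := by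
  have hexp : exp (2 * x) = exp x * exp x := by rw [← exp_add, two_mul]
  rw [tanh_eq, Real.sigmoid_def, exp_neg, exp_neg, hexp]
  have := exp_pos x
  field_simp
  ring

lemma Real.continuous_tanh : Continuous tanh := by
  simp_rw [funext tanh_eq_two_mul_sigmoid_sub_one]
  fun_prop

lemma Real.tendsto_tanh_atTop : Tendsto tanh atTop (𝓝 1) := by
  simp_rw [funext tanh_eq_two_mul_sigmoid_sub_one]
  have hsigmoid := Real.tendsto_sigmoid_atTop.comp (tendsto_id.const_mul_atTop two_pos)
  convert (hsigmoid.const_mul 2).sub_const 1 using 2 <;> norm_num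

lemma tendsto_sum_prod_sigmoid_atTop {ι : Type*} [Fintype ι] {κ : ι → Type*}
    [∀ i, Fintype (κ i)] (g : (i : ι) → κ i → ℝ)
    [DecidablePred fun i => ∀ j, g i j < 0] (hg : ∀ i j, g i j ≠ 0) :
    Tendsto (fun s => ∑ i, ∏ j, sigmoid s (g i j)) atTop
      (𝓝 (#{i | ∀ j, g i j < 0} : ℝ)) := by
  have hcount : (#{i | ∀ j, g i j < 0} : ℝ) = ∑ i, ∏ j, if g i j < 0 then 1 else 0 := by
    simp_rw [Fintype.prod_boole, natCast_card_filter]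
    congr!
  rw [hcount]
  exact tendsto_finsetSum _ fun i _ =>
    tendsto_finsetProd _ fun j _ => tendsto_sigmoid_atTop (hg i j)

lemma tendsto_sum_tanh_mul_smul_atTop {ι F : Type*} [Fintype ι] [NormedAddCommGroup F]
    [NormedSpace ℝ F] (f : ι → F) (c : ι → ℝ) (i₀ : ι) (hc₀ : 0 < c i₀)
    (hc : ∀ i, i ≠ i₀ → c i = 0) :
    Tendsto (fun ζ => ∑ i, Real.tanh (ζ * c i) • f i) atTop (𝓝 (f i₀)) := by
  have hsingle :
      (fun ζ => ∑ i, Real.tanh (ζ * c i) • f i) = fun ζ => Real.tanh (ζ * c i₀) • f i₀ :=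
    funext fun ζ => sum_eq_single i₀ (fun i _ hi => by simp [hc i hi]) (by simp)
  rw [hsingle]
  simpa using (Real.tendsto_tanh_atTop.comp (tendsto_id.atTop_mul_const hc₀)).smul_const (f i₀)

theorem grashs_rhs_tendsto_active_segment
    {F : Type*} [NormedAddCommGroup F] [NormedSpace ℝ F]
    (m : ℕ) (f : Fin m → F)
    (pk : Fin m → ℕ) (qk : (k : Fin m) → Fin (pk k) → ℕ)
    (g : (k : Fin m) → (i : Fin (pk k)) → Fin (qk k i) → ℝ)
    (hg : ∀ k i j, g k i j ≠ 0)
    (kstar : Fin m)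
    (hB : ∀ k : Fin m,
      (∃ i : Fin (pk k), ∀ j : Fin (qk k i), g k i j < 0) ↔ k = kstar) :
    ∃ L : ℝ → F,
      (∀ ζ : ℝ, Tendsto
        (fun s : ℝ => ∑ k : Fin m,
          Real.tanh (ζ * ∑ i : Fin (pk k), ∏ j : Fin (qk k i),
            sigmoid s (g k i j)) • f k)
        atTop (nhds (L ζ))) ∧
      Tendsto L atTop (nhds (f kstar)) := by
  set N : Fin m → ℝ := fun k => (#{i | ∀ j, g k i j < 0} : ℝ)
  refine ⟨fun ζ => ∑ k, Real.tanh (ζ * N k) • f k, fun ζ => ?_, ?_⟩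
  · refine tendsto_finsetSum _ fun k _ => Tendsto.smul_const ?_ (f k)
    exact (Real.continuous_tanh.tendsto _).comp
      ((tendsto_sum_prod_sigmoid_atTop (g k) (hg k)).const_mul ζ)
  · have hpos : 0 < N kstar := by
      simpa [N, filter_nonempty_iff] using (hB kstar).mpr rfl
    have hzero : ∀ k, k ≠ kstar → N k = 0 := fun k hk => by
      simpa [N, filter_eq_empty_iff] using mt (hB k).mp hk
    exact tendsto_sum_tanh_mul_smul_atTop f N kstar hpos hzero
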